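/- The global function f_L of the sand automaton L is surjective on all configurations and P-surjective: every configuration has a preimage under f_L, and every periodic configuration has a periodic preimage under f_L. -/

import Mathlib

/-- The extended integers `ℤ ∪ {-∞, +∞}`. -/
abbrev EZ : Type := WithBot (WithTop ℤ)

/-- Embedding of `ℤ` into the extended integers. -/
def finVal (n : ℤ) : EZ := ((n : WithTop ℤ) : EZ)

/-- The integer value of a finite extended integer (`0` on `±∞`). -/
def valZ (x : EZ) : ℤ := WithBot.recBotCoe 0 (fun y => WithTop.recTopCoe 0 id y) x

/-- The measuring device `β_l^m`. -/
noncomputable def beta (l : ℕ) (m : ℤ) (n : EZ) : EZ :=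
  if finVal (m + (l : ℤ)) < n then ⊤
  else if n < finVal (m - (l : ℤ)) then ⊥
  else WithBot.map (WithTop.map (fun k => k - m)) n

/-- Reference height: the value of `x` if finite, `0` if `x = ±∞`. -/
def refH (x : EZ) : ℤ := if x = ⊥ ∨ x = ⊤ then 0 else valZ x

/-- One-dimensional sandpile configurations. -/
abbrev Config : Type := ℤ → EZ

/-- The neighborhood sequence `d_r^i(c)`: the `2r`-tuple of measured differences. -/
noncomputable def nbhd (r : ℕ) (c : Config) (i : ℤ) : Fin (2 * r) → EZ :=
  fun j => beta r (refH (c i))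
    (c (i + (if (j : ℕ) < r then ((j : ℕ) : ℤ) - (r : ℤ) else ((j : ℕ) : ℤ) - (r : ℤ) + 1)))

/-- The global function of the sand automaton of radius `r` with local rule `lam`. -/
noncomputable def globalF (r : ℕ) (lam : (Fin (2 * r) → EZ) → ℤ) (c : Config) : Config :=
  fun i => if c i = ⊥ ∨ c i = ⊤ then c i
    else finVal (valZ (c i) + lam (nbhd r c i))

/-- Finite configurations. -/
def FiniteConf (c : Config) : Prop := ∃ k : ℕ, ∀ i : ℤ, (k : ℤ) ≤ |i| → c i = finVal 0

/-- Periodic configurations. -/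
def PeriodicConf (c : Config) : Prop := ∃ p : ℤ, p ≠ 0 ∧ ∀ i : ℤ, c (i + p) = c i


/-- The local rule of the sand automaton `L`:
`λ_L(x,y) = -1` if `x < 0`, `+1` if `x > 0`, `0` otherwise. -/
noncomputable def lamL (v : Fin 2 → EZ) : ℤ :=
  if v 0 < finVal 0 then -1
  else if finVal 0 < v 0 then 1
  else 0

/-!
The automaton `L` moves every finite cell one unit towards the height of its left neighbour.
A preimage of `c` is obtained by shifting each finite cell by `s i ∈ {-1, 0, 1}`: by `+1` if
it lies above its left neighbour, by `-1` if below, and along a plateau of equal finite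
heights with alternating signs, continued from the plateau's left end (or `0` if the plateau
is unbounded to the left), so that each preimage cell again sits on the side of its left
neighbour that moves it back to its target. The construction commutes with translations, so
periodic configurations get periodic preimages.
-/

lemma finVal_lt_finVal {a b : ℤ} : finVal a < finVal b ↔ a < b := by simp [finVal]

lemma bot_lt_finVal (n : ℤ) : (⊥ : EZ) < finVal n := by simp [finVal]

lemma finVal_lt_top (n : ℤ) : finVal n < (⊤ : EZ) :=
  WithBot.coe_lt_coe.mpr (WithTop.coe_lt_top n)

lemma finVal_add (a b : ℤ) : finVal (a + b) = finVal a + finVal b := by simp [finVal]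

lemma valZ_finVal (n : ℤ) : valZ (finVal n) = n := rfl

lemma refH_finVal (n : ℤ) : refH (finVal n) = n := by
  rw [refH, if_neg (by simp [finVal]), valZ_finVal]

lemma top_add_finVal (n : ℤ) : (⊤ : EZ) + finVal n = ⊤ := rfl

lemma EZ.cases (x : EZ) : x = ⊥ ∨ x = ⊤ ∨ ∃ n, x = finVal n := by
  rcases x with _ | _ | n
  exacts [Or.inl rfl, Or.inr (Or.inl rfl), Or.inr (Or.inr ⟨n, rfl⟩)]

lemma beta_finVal (l : ℕ) (m a : ℤ) : beta l m (finVal a) =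
    if m + l < a then ⊤ else if a < m - l then ⊥ else finVal (a - m) := by
  simp only [beta, finVal_lt_finVal]
  rfl

lemma beta_lt_finVal_zero_iff (l : ℕ) (m : ℤ) (x : EZ) :
    beta l m x < finVal 0 ↔ x < finVal m := by
  rcases EZ.cases x with rfl | rfl | ⟨a, rfl⟩
  · simp [beta, bot_lt_finVal]
  · simp [beta, finVal_lt_top]
  · rw [beta_finVal, finVal_lt_finVal]
    split_ifs
    · exact iff_of_false (finVal_lt_top 0).not_gt (by omega)
    · exact iff_of_true (bot_lt_finVal 0) (by omega)
    · rw [finVal_lt_finVal]; omega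

lemma finVal_zero_lt_beta_iff (l : ℕ) (m : ℤ) (x : EZ) :
    finVal 0 < beta l m x ↔ finVal m < x := by
  rcases EZ.cases x with rfl | rfl | ⟨a, rfl⟩
  · simp [beta, bot_lt_finVal]
  · simp [beta, finVal_lt_top]
  · rw [beta_finVal, finVal_lt_finVal]
    split_ifs
    · exact iff_of_true (finVal_lt_top 0) (by omega)
    · exact iff_of_false (bot_lt_finVal 0).not_gt (by omega)
    · rw [finVal_lt_finVal]; omega

lemma nbhd_one_zero (c : Config) (i : ℤ) : nbhd 1 c i 0 = beta 1 (refH (c i)) (c (i - 1)) := by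
  simp [nbhd, sub_eq_add_neg]

lemma globalF_of_infinite {r : ℕ} {lam : (Fin (2 * r) → EZ) → ℤ} {c : Config} {i : ℤ}
    (h : c i = ⊥ ∨ c i = ⊤) : globalF r lam c i = c i :=
  if_pos h

noncomputable def stepL (x : EZ) (m : ℤ) : ℤ :=
  if x < finVal m then -1 else if finVal m < x then 1 else 0

lemma globalF_L_of_finVal {c : Config} {i m : ℤ} (h : c i = finVal m) :
    globalF 1 lamL c i = finVal (m + stepL (c (i - 1)) m) := by
  have hfin : ¬(c i = ⊥ ∨ c i = ⊤) := by simp [h, finVal]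
  rw [globalF, if_neg hfin]
  simp only [lamL, nbhd_one_zero, h, refH_finVal, beta_lt_finVal_zero_iff,
    finVal_zero_lt_beta_iff, stepL, valZ_finVal]

section altExt

open Classical

noncomputable def altExt (P : ℤ → Prop) (b : ℤ → ℤ) (i : ℤ) : ℤ :=
  if h : ∃ k : ℕ, ¬P (i - k) then (-1) ^ Nat.find h * b (i - Nat.find h) else 0

variable {P : ℤ → Prop} {b : ℤ → ℤ} {i : ℤ}

lemma altExt_of_not (h : ¬P i) : altExt P b i = b i := by
  have hex : ∃ k : ℕ, ¬P (i - k) := ⟨0, by simpa using h⟩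
  rw [altExt, dif_pos hex, (Nat.find_eq_zero hex).2 (by simpa using h)]
  simp

lemma altExt_of (h : P i) : altExt P b i = -altExt P b (i - 1) := by
  have shift (n : ℕ) : i - ↑(n + 1) = i - 1 - n := by push_cast; ring
  by_cases hex : ∃ k : ℕ, ¬P (i - 1 - k)
  · have hex' : ∃ k : ℕ, ¬P (i - k) := by
      obtain ⟨k, hk⟩ := hex
      exact ⟨k + 1, by rwa [shift]⟩
    have hsucc : Nat.find hex' = Nat.find hex + 1 := by
      rw [Nat.find_comp_succ hex' (by simpa only [shift] using hex) (by simpa using h)]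
      simp only [shift]
    rw [altExt, altExt, dif_pos hex', dif_pos hex, hsucc, pow_succ, shift]
    ring
  · have hex' : ¬∃ k : ℕ, ¬P (i - k) := by
      rintro ⟨_ | k, hk⟩
      · exact hk (by simpa using h)
      · exact hex ⟨k, by rwa [shift] at hk⟩
    rw [altExt, altExt, dif_neg hex', dif_neg hex, neg_zero]

lemma abs_altExt_le {C : ℤ} (hb : ∀ j, |b j| ≤ C) : |altExt P b i| ≤ C := by
  unfold altExt
  split_ifs
  · simpa [abs_mul] using hb _
  · simpa using (abs_nonneg _).trans (hb 0)

lemma altExt_add (p : ℤ) :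
    altExt P b (i + p) = altExt (fun j => P (j + p)) (fun j => b (j + p)) i := by
  simp only [altExt, sub_add_eq_add_sub]

end altExt

def IsPlateau (c : Config) (i : ℤ) : Prop := ∃ n, c (i - 1) = finVal n ∧ c i = finVal n

noncomputable def preShift (c : Config) : ℤ → ℤ :=
  altExt (IsPlateau c) fun i => if c (i - 1) < c i then 1 else -1

noncomputable def preL (c : Config) : Config := fun i => c i + finVal (preShift c i)

lemma abs_preShift_le (c : Config) (i : ℤ) : |preShift c i| ≤ 1 :=
  abs_altExt_le fun j => by split_ifs <;> simp

lemma preShift_of_not_isPlateau {c : Config} {i : ℤ} (h : ¬IsPlateau c i) :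
    preShift c i = if c (i - 1) < c i then 1 else -1 :=
  altExt_of_not h

lemma preShift_of_isPlateau {c : Config} {i : ℤ} (h : IsPlateau c i) :
    preShift c i = -preShift c (i - 1) :=
  altExt_of h

lemma stepL_finVal (a m : ℤ) :
    stepL (finVal a) m = if a < m then -1 else if m < a then 1 else 0 := by
  simp only [stepL, finVal_lt_finVal]

lemma stepL_preL {c : Config} {i b : ℤ} (hb : c i = finVal b) :
    stepL (preL c (i - 1)) (b + preShift c i) = -preShift c i := by
  rcases EZ.cases (c (i - 1)) with hl | hl | ⟨a, hl⟩
  · have hs : preShift c i = 1 := by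
      rw [preShift_of_not_isPlateau (by simp [IsPlateau, hl, finVal]), hl, hb,
        if_pos (bot_lt_finVal b)]
    simp [preL, hl, hs, stepL, bot_lt_finVal]
  · have hs : preShift c i = -1 := by
      rw [preShift_of_not_isPlateau (by simp [IsPlateau, hl, finVal]), hl, hb,
        if_neg (finVal_lt_top b).not_gt]
    simp [preL, hl, hs, stepL, top_add_finVal, finVal_lt_top]
  · have hs : preShift c i = if a < b then 1 else if b < a then -1 else -preShift c (i - 1) := by
      by_cases hab : a = b
      · subst hab
        simpa using preShift_of_isPlateau ⟨a, hl, hb⟩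
      · rw [preShift_of_not_isPlateau (by simp [IsPlateau, hl, hb, finVal]; omega), hl, hb]
        simp only [finVal_lt_finVal]
        split_ifs <;> omega
    have h₁ := abs_le.1 (abs_preShift_le c i)
    have h₂ := abs_le.1 (abs_preShift_le c (i - 1))
    rw [show preL c (i - 1) = finVal (a + preShift c (i - 1)) by simp [preL, hl, finVal_add],
      stepL_finVal]
    split_ifs at hs ⊢ <;> omega

lemma globalF_L_preL (c : Config) : globalF 1 lamL (preL c) = c := by
  funext i
  rcases EZ.cases (c i) with h | h | ⟨b, h⟩
  · have hpre : preL c i = ⊥ := by simp [preL, h]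
    rw [globalF_of_infinite (Or.inl hpre), hpre, h]
  · have hpre : preL c i = ⊤ := by simp [preL, h, top_add_finVal]
    rw [globalF_of_infinite (Or.inr hpre), hpre, h]
  · have hpre : preL c i = finVal (b + preShift c i) := by simp [preL, h, finVal_add]
    rw [globalF_L_of_finVal hpre, stepL_preL h, h, add_neg_cancel_right]

lemma preL_comp_add (c : Config) (p i : ℤ) :
    preL (fun j => c (j + p)) i = preL c (i + p) := by
  have hplat : IsPlateau (fun j => c (j + p)) = fun j => IsPlateau c (j + p) := by
    funext j
    simp only [IsPlateau, sub_add_eq_add_sub]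
  simp only [preL, preShift, altExt_add, hplat, sub_add_eq_add_sub]

/-- `f_L` is surjective on all configurations and `P`-surjective: every configuration
has a preimage under `f_L`, and every periodic configuration has a periodic preimage. -/
theorem L_surjective :
    Function.Surjective (globalF 1 lamL) ∧
    (∀ c : Config, PeriodicConf c → ∃ c', PeriodicConf c' ∧ globalF 1 lamL c' = c) := by
  refine ⟨fun c => ⟨preL c, globalF_L_preL c⟩, ?_⟩
  rintro c ⟨p, hp, hc⟩
  refine ⟨preL c, ⟨p, hp, fun i => ?_⟩, globalF_L_preL c⟩
  rw [← preL_comp_add, show (fun j => c (j + p)) = c from funext hc]
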